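/- arXiv:2412.09407 — 4 statements merged into one kernel-verified Lean document; each statement's English description precedes it below -/
import Mathlib

section
/- Transfer of bounded belief equivalence to children: if Ψ_n^i = Ψ_{n'}^i for some i ≥ 1, and m is an out-neighbour of n and m' is an out-neighbour of n' with ℓ(m) = ℓ'(m'), then Ψ_m^{i−1} = Ψ_{m'}^{i−1}. -/
/-- `PiSet E lab i n` is the set of belief sequences of paths of length `i`
starting at node `n` in the RBR graph `(E, lab)`. -/
def PiSet {A : Type} {Node : Type} (E : Node → Node → Prop) (lab : Node → A) :
    ℕ → Node → Set (List A)
  | 0, _ => ∅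
  | 1, n => {[lab n]}
  | i + 2, n => {l | ∃ m, E n m ∧ ∃ σ ∈ PiSet E lab (i + 1) m, l = lab n :: σ}

/-- `PsiSet E lab j n` is the set of belief sequences of paths of length at
most `j` starting at node `n`. -/
def PsiSet {A : Type} {Node : Type} (E : Node → Node → Prop) (lab : Node → A)
    (j : ℕ) (n : Node) : Set (List A) :=
  {l | ∃ i, 0 < i ∧ i ≤ j ∧ l ∈ PiSet E lab i n}

/-- `PsiStar E lab n` is the set of belief sequences of all paths starting
at node `n` — the full belief hierarchy of node `n`. -/
def PsiStar {A : Type} {Node : Type} (E : Node → Node → Prop) (lab : Node → A)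
    (n : Node) : Set (List A) :=
  {l | ∃ i, l ∈ PiSet E lab i n}

lemma piSet_length_aux {A Node : Type} (E : Node → Node → Prop) (lab : Node → A) :
    ∀ i n l, l ∈ PiSet E lab i n → l.length = i := by
  intro i
  induction i using Nat.strong_induction_on with
  | _ i ih =>
    intro n l hl
    match i with
    | 0 => exact absurd hl (by simp [PiSet])
    | 1 => simp [PiSet] at hl; subst hl; rfl
    | (q+2) =>
      obtain ⟨m, _, σ, hσ, rfl⟩ := hl
      simp [ih (q+1) (by omega) m σ hσ]

lemma piSet_head_aux {A Node : Type} (E : Node → Node → Prop) (lab : Node → A) :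
    ∀ i n l, l ∈ PiSet E lab (i+1) n → ∃ t, l = lab n :: t := by
  intro i n l hl
  match i with
  | 0 => simp [PiSet] at hl; exact ⟨[], hl⟩
  | (q+1) => obtain ⟨m, _, σ, hσ, rfl⟩ := hl; exact ⟨σ, rfl⟩

lemma psiSet_children_subset {A : Type} {Node Node' : Type}
    (E : Node → Node → Prop) (lab : Node → A)
    (E' : Node' → Node' → Prop) (lab' : Node' → A)
    (out_inj' : ∀ n m₁ m₂, E' n m₁ → E' n m₂ → lab' m₁ = lab' m₂ → m₁ = m₂)
    (n m : Node) (n' m' : Node') (j : ℕ)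
    (h : PsiSet E lab (j+1) n ⊆ PsiSet E' lab' (j+1) n')
    (hm : E n m) (hm' : E' n' m') (hl : lab m = lab' m') :
    PsiSet E lab j m ⊆ PsiSet E' lab' j m' := by
  intro l hl'
  obtain ⟨p, hp0, hpj, hlp⟩ := hl'
  obtain ⟨q, rfl⟩ : ∃ q, p = q + 1 := ⟨p - 1, by omega⟩
  have hmem : (lab n :: l) ∈ PsiSet E lab (j+1) n :=
    ⟨q + 2, by omega, by omega, ⟨m, hm, l, hlp, rfl⟩⟩
  obtain ⟨r, hr0, hrj, hr⟩ := h hmem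
  have hlen : (lab n :: l).length = r := piSet_length_aux E' lab' r n' _ hr
  have hlenl : l.length = q + 1 := piSet_length_aux E lab _ m l hlp
  have : r = q + 2 := by simp [hlenl] at hlen; omega
  subst this
  obtain ⟨m'', hm'', σ, hσ, heq⟩ := hr
  have hσl : σ = l := by injection heq with h1 h2; exact h2.symm
  subst hσl
  obtain ⟨t, ht⟩ := piSet_head_aux E lab q m σ hlp
  obtain ⟨t', ht'⟩ := piSet_head_aux E' lab' q m'' σ hσ
  have : lab' m'' = lab' m' := by
    rw [ht] at ht'
    have := List.head_eq_of_cons_eq ht'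
    rw [← this, hl]
  have := out_inj' n' m'' m' hm'' hm' this
  subst this
  exact ⟨q + 1, by omega, by omega, hσ⟩

/-- transfer of bounded belief equivalence to children — if
`Ψ_n^i = Ψ_{n'}^i` for some `i ≥ 1`, `m` is an out-neighbour of `n`, `m'` is
an out-neighbour of `n'`, and `lab m = lab' m'`, then
`Ψ_m^{i−1} = Ψ_{m'}^{i−1}`. -/
theorem psiSet_eq_children {A : Type} {Node Node' : Type}
    [Fintype Node] [Fintype Node']
    (E : Node → Node → Prop) (lab : Node → A)
    (E' : Node' → Node' → Prop) (lab' : Node' → A)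
    (lab_ne : ∀ n m, E n m → lab n ≠ lab m)
    (lab_ne' : ∀ n m, E' n m → lab' n ≠ lab' m)
    (out_inj : ∀ n m₁ m₂, E n m₁ → E n m₂ → lab m₁ = lab m₂ → m₁ = m₂)
    (out_inj' : ∀ n m₁ m₂, E' n m₁ → E' n m₂ → lab' m₁ = lab' m₂ → m₁ = m₂)
    (n m : Node) (n' m' : Node') (i : ℕ) (hi : 1 ≤ i)
    (h : PsiSet E lab i n = PsiSet E' lab' i n')
    (hm : E n m) (hm' : E' n' m') (hl : lab m = lab' m') :
    PsiSet E lab (i - 1) m = PsiSet E' lab' (i - 1) m' := by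
  obtain ⟨j, rfl⟩ : ∃ j, i = j + 1 := ⟨i - 1, by omega⟩
  simp only [Nat.add_sub_cancel]
  apply Set.Subset.antisymm
  · exact psiSet_children_subset E lab E' lab' out_inj' n m n' m' j (h ▸ le_refl _) hm hm' hl
  · exact psiSet_children_subset E' lab' E lab out_inj n' m' n m j (h ▸ le_refl _) hm' hm hl.symm
end

section
/- Transfer of full belief equivalence to children: if Ψ_n^* = Ψ_{n'}^*, and m is an out-neighbour of n and m' an out-neighbour of n' with ℓ(m) = ℓ'(m'), then Ψ_m^* = Ψ_{m'}^*. -/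
lemma piSet_head {A Node : Type} (E : Node → Node → Prop) (lab : Node → A) :
    ∀ (i : ℕ) (n : Node) (σ : List A), σ ∈ PiSet E lab i n → ∃ t, σ = lab n :: t := by
  intro i
  match i with
  | 0 => intro n σ hσ; exact absurd hσ (by simp [PiSet])
  | 1 => intro n σ hσ; exact ⟨[], hσ⟩
  | i + 2 =>
    rintro n σ ⟨m, _, σ', _, rfl⟩
    exact ⟨σ', rfl⟩

lemma psiStar_mem_iff {A Node : Type} (E : Node → Node → Prop) (lab : Node → A)
    (out_inj : ∀ n m₁ m₂, E n m₁ → E n m₂ → lab m₁ = lab m₂ → m₁ = m₂)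
    (n m : Node) (hm : E n m) (σ : List A) :
    σ ∈ PsiStar E lab m ↔ (∃ t, σ = lab m :: t) ∧ (lab n :: σ) ∈ PsiStar E lab n := by
  constructor
  · rintro ⟨i, hi⟩
    refine ⟨piSet_head E lab i m σ hi, i + 1, ?_⟩
    match i with
    | 0 => exact absurd hi (by simp [PiSet])
    | i + 1 => exact ⟨m, hm, σ, hi, rfl⟩
  · rintro ⟨⟨t, rfl⟩, j, hj⟩
    match j with
    | 0 => exact absurd hj (by simp [PiSet])
    | 1 => simp [PiSet] at hj
    | j + 2 =>
      obtain ⟨m'', hEm'', σ', hσ', heq⟩ := hj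
      have hσeq : σ' = lab m :: t := by
        injection heq with h1 h2; exact h2.symm
      obtain ⟨t', ht'⟩ := piSet_head E lab _ m'' σ' hσ'
      have hme : m'' = m := out_inj n m'' m hEm'' hm (by
        rw [ht'] at hσeq; injection hσeq)
      subst hme
      exact ⟨j + 1, by rw [← hσeq]; exact hσ'⟩

/-- transfer of full belief equivalence to children — if
`Ψ_n^* = Ψ_{n'}^*`, `m` is an out-neighbour of `n`, `m'` an out-neighbour of
`n'`, and `lab m = lab' m'`, then `Ψ_m^* = Ψ_{m'}^*`. -/
theorem psiStar_eq_children {A : Type} {Node Node' : Type}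
    [Fintype Node] [Fintype Node']
    (E : Node → Node → Prop) (lab : Node → A)
    (E' : Node' → Node' → Prop) (lab' : Node' → A)
    (lab_ne : ∀ n m, E n m → lab n ≠ lab m)
    (lab_ne' : ∀ n m, E' n m → lab' n ≠ lab' m)
    (out_inj : ∀ n m₁ m₂, E n m₁ → E n m₂ → lab m₁ = lab m₂ → m₁ = m₂)
    (out_inj' : ∀ n m₁ m₂, E' n m₁ → E' n m₂ → lab' m₁ = lab' m₂ → m₁ = m₂)
    (n m : Node) (n' m' : Node')
    (h : PsiStar E lab n = PsiStar E' lab' n')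
    (hm : E n m) (hm' : E' n' m') (hl : lab m = lab' m') :
    PsiStar E lab m = PsiStar E' lab' m' := by
  have hroot : lab n = lab' n' := by
    have h1 : [lab n] ∈ PsiStar E lab n := ⟨1, rfl⟩
    rw [h] at h1
    obtain ⟨j, hj⟩ := h1
    obtain ⟨t, ht⟩ := piSet_head E' lab' j n' _ hj
    injection ht
  ext σ
  rw [psiStar_mem_iff E lab out_inj n m hm σ,
      psiStar_mem_iff E' lab' out_inj' n' m' hm' σ, hl, hroot, h]
end

section
/- If Ψ_n^i = Ψ_{n'}^i for i ≥ 2, then the sets of labels of out-neighbours of n and n' coincide (B_n = B_{n'}), and for each agent b in B_n, the unique out-neighbours of n and n' with label b satisfy Ψ_{β_n(b)}^{i−1} = Ψ_{β_{n'}(b)}^{i−1}. -/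
lemma piSet_shape {A Node : Type} (E : Node → Node → Prop) (lab : Node → A) :
    ∀ (i : ℕ) (n : Node) (l : List A), l ∈ PiSet E lab i n →
      ∃ t, l = lab n :: t ∧ l.length = i := by
  intro i
  induction i with
  | zero => intro n l h; simp [PiSet] at h
  | succ i ih =>
    intro n l h
    match i with
    | 0 =>
      simp only [PiSet, Set.mem_singleton_iff] at h
      exact ⟨[], h, by simp [h]⟩
    | j + 1 =>
      obtain ⟨m, hm, σ, hσ, rfl⟩ := h
      obtain ⟨t, ht, hlen⟩ := ih m σ hσ
      exact ⟨σ, rfl, by simp [hlen]⟩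

lemma piSet_step {A Node : Type} (E : Node → Node → Prop) (lab : Node → A)
    {k : ℕ} (hk : 0 < k) {n m : Node} {σ : List A}
    (hE : E n m) (hσ : σ ∈ PiSet E lab k m) :
    (lab n :: σ) ∈ PiSet E lab (k + 1) n := by
  match k, hk with
  | j + 1, _ => exact ⟨m, hE, σ, hσ, rfl⟩

lemma psiSet_key {A Node Node' : Type}
    (E : Node → Node → Prop) (lab : Node → A)
    (E' : Node' → Node' → Prop) (lab' : Node' → A)
    (out_inj' : ∀ n m₁ m₂, E' n m₁ → E' n m₂ → lab' m₁ = lab' m₂ → m₁ = m₂)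
    (n : Node) (n' : Node') (i : ℕ) (hi : 2 ≤ i)
    (h : PsiSet E lab i n ⊆ PsiSet E' lab' i n') :
    (∀ m, E n m → ∃ m', E' n' m' ∧ lab' m' = lab m) ∧
    (∀ (m : Node) (m' : Node'), E n m → E' n' m' → lab m = lab' m' →
      PsiSet E lab (i - 1) m ⊆ PsiSet E' lab' (i - 1) m') := by
  constructor
  · intro m hm
    have h2 : [lab n, lab m] ∈ PiSet E lab 2 n :=
      ⟨m, hm, [lab m], rfl, rfl⟩
    have := h ⟨2, by norm_num, hi, h2⟩
    obtain ⟨k, hk0, hki, hk⟩ := this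
    obtain ⟨t, ht, hlen⟩ := piSet_shape E' lab' k n' _ hk
    have hk2 : k = 2 := by simpa using hlen.symm
    subst hk2
    obtain ⟨m', hm', σ, hσ, heq⟩ := hk
    obtain ⟨t', ht', _⟩ := piSet_shape E' lab' 1 m' σ hσ
    have : σ = [lab' m'] := by
      simpa only [PiSet, Set.mem_singleton_iff] using hσ
    subst this
    have : lab m = lab' m' :=
      (List.cons_eq_cons.mp (List.cons_eq_cons.mp heq).2).1
    exact ⟨m', hm', this.symm⟩
  · intro m m' hm hm' hlab σ hσ
    obtain ⟨k, hk0, hki, hk⟩ := hσ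
    have hσlen := piSet_shape E lab k m σ hk
    obtain ⟨t, ht, hlen⟩ := hσlen
    have hmem : (lab n :: σ) ∈ PsiSet E lab i n :=
      ⟨k + 1, Nat.succ_pos _, by omega, piSet_step E lab hk0 hm hk⟩
    obtain ⟨j, hj0, hji, hj⟩ := h hmem
    obtain ⟨t2, ht2, hlen2⟩ := piSet_shape E' lab' j n' _ hj
    have hjk : j = k + 1 := by simp [hlen] at hlen2; omega
    subst hjk
    match k, hk0 with
    | k' + 1, _ =>
      obtain ⟨m'', hm'', τ, hτ, heq⟩ := hj
      have hτσ : τ = σ := by injection heq with _ h5; exact h5.symm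
      subst hτσ
      obtain ⟨t3, ht3, _⟩ := piSet_shape E' lab' (k' + 1) m'' τ hτ
      have : lab' m'' = lab' m' := by
        rw [ht] at ht3
        injection ht3 with h4 _
        rw [← h4, ← hlab]
      have := out_inj' n' m'' m' hm'' hm' this
      subst this
      exact ⟨k' + 1, Nat.succ_pos _, by omega, hτ⟩

/-- if `Ψ_n^i = Ψ_{n'}^i` for `i ≥ 2`, then the sets of labels
of out-neighbours of `n` and `n'` coincide, and any out-neighbours of `n`
and `n'` carrying the same label `b` (which are unique, by the RBR graph
conditions) satisfy `Ψ^{i−1}`-equivalence. -/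
theorem psiSet_eq_adj {A : Type} {Node Node' : Type}
    [Fintype Node] [Fintype Node']
    (E : Node → Node → Prop) (lab : Node → A)
    (E' : Node' → Node' → Prop) (lab' : Node' → A)
    (lab_ne : ∀ n m, E n m → lab n ≠ lab m)
    (lab_ne' : ∀ n m, E' n m → lab' n ≠ lab' m)
    (out_inj : ∀ n m₁ m₂, E n m₁ → E n m₂ → lab m₁ = lab m₂ → m₁ = m₂)
    (out_inj' : ∀ n m₁ m₂, E' n m₁ → E' n m₂ → lab' m₁ = lab' m₂ → m₁ = m₂)
    (n : Node) (n' : Node') (i : ℕ) (hi : 2 ≤ i)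
    (h : PsiSet E lab i n = PsiSet E' lab' i n') :
    {b : A | ∃ m, E n m ∧ lab m = b} = {b : A | ∃ m', E' n' m' ∧ lab' m' = b} ∧
      ∀ (m : Node) (m' : Node'), E n m → E' n' m' → lab m = lab' m' →
        PsiSet E lab (i - 1) m = PsiSet E' lab' (i - 1) m' := by
  obtain ⟨h1, h2⟩ := psiSet_key E lab E' lab' out_inj' n n' i hi h.subset
  obtain ⟨h1', h2'⟩ := psiSet_key E' lab' E lab out_inj n' n i hi h.symm.subset
  constructor
  · ext b
    constructor
    · rintro ⟨m, hm, rfl⟩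
      obtain ⟨m', hm', hl⟩ := h1 m hm
      exact ⟨m', hm', hl⟩
    · rintro ⟨m', hm', rfl⟩
      obtain ⟨m, hm, hl⟩ := h1' m' hm'
      exact ⟨m, hm, hl⟩
  · intro m m' hm hm' hlab
    exact Set.Subset.antisymm (h2 m m' hm hm' hlab) (h2' m' m hm' hm hlab.symm)
end

section
/- Local isomorphisms preserve belief hierarchies: if α is a local isomorphism from RBR graph (N, E, ℓ) to (N', E', ℓ'), then Ψ_n^* = Ψ_{α(n)}^* for every node n ∈ N. -/
/-- local isomorphisms preserve belief hierarchies — if `α` is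
a local isomorphism from the RBR graph `(Node, E, lab)` to
`(Node', E', lab')`, then `Ψ_n^* = Ψ_{α(n)}^*` for every node `n`. -/
theorem localIso_psiStar {A : Type} {Node Node' : Type}
    [Fintype Node] [Fintype Node']
    (E : Node → Node → Prop) (lab : Node → A)
    (E' : Node' → Node' → Prop) (lab' : Node' → A)
    (lab_ne : ∀ n m, E n m → lab n ≠ lab m)
    (lab_ne' : ∀ n m, E' n m → lab' n ≠ lab' m)
    (out_inj : ∀ n m₁ m₂, E n m₁ → E n m₂ → lab m₁ = lab m₂ → m₁ = m₂)
    (out_inj' : ∀ n m₁ m₂, E' n m₁ → E' n m₂ → lab' m₁ = lab' m₂ → m₁ = m₂)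
    (α : Node → Node') (hsurj : Function.Surjective α)
    (hedge : ∀ n m', (∃ m, E n m ∧ α m = m') ↔ E' (α n) m')
    (hlab : ∀ n, lab n = lab' (α n)) :
    ∀ n, PsiStar E lab n = PsiStar E' lab' (α n) := by
  have key : ∀ i n, PiSet E lab i n = PiSet E' lab' i (α n) := by
    intro i
    induction i using Nat.strong_induction_on with
    | _ i ih =>
      match i with
      | 0 => intro n; rfl
      | 1 =>
        intro n
        simp only [PiSet, hlab]
      | (j+2) =>
        intro n
        ext l
        constructor
        · rintro ⟨m, hEm, σ, hσ, rfl⟩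
          exact ⟨α m, (hedge n (α m)).1 ⟨m, hEm, rfl⟩, σ,
            (ih (j+1) (by omega) m) ▸ hσ, by rw [hlab]⟩
        · rintro ⟨m', hEm', σ, hσ, rfl⟩
          obtain ⟨m, hEm, rfl⟩ := (hedge n m').2 hEm'
          exact ⟨m, hEm, σ, (ih (j+1) (by omega) m).symm ▸ hσ, by rw [hlab]⟩
  intro n
  ext l
  constructor
  · rintro ⟨i, h⟩; exact ⟨i, (key i n) ▸ h⟩
  · rintro ⟨i, h⟩; exact ⟨i, (key i n).symm ▸ h⟩
end
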